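/- A commutative ring R is S-coherent if and only if every finitely presented R-module is an S-coherent R-module. -/

import Mathlib

/-!
A version of Schanuel's lemma makes the kernel of every surjection from a finitely generated
module onto an `S`-finitely presented module `S`-finite. Applied to the f.g. ideals `f(P) ⊆ R`,
`S`-coherence of `R` makes the kernel of every map `P → R` from a f.g. module `S`-finite, and
splitting off one coordinate at a time extends this to maps `P → Rⁿ`. The preimage of a f.g.
submodule `K = g(Q) ⊆ Rⁿ` under `f : P → Rⁿ` is the projection of `ker (f + g) ⊆ P × Q`, hence
`S`-finite too. If `M = Rⁿ / K` is finitely presented and `N ⊆ M` is generated by the images of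
`Rᵏ → M`, lifting that map to `h : Rᵏ → Rⁿ` identifies the relations of `N` with `h⁻¹(K)`.
-/

open Function LinearMap

/-- A module `M` is `S`-finite: there is a f.g. submodule `N₀` and `s ∈ S` with `s • M ⊆ N₀`. -/
def SFiniteMod (R : Type*) [CommRing R] (S : Submonoid R)
    (M : Type*) [AddCommGroup M] [Module R M] : Prop :=
  ∃ N₀ : Submodule R M, N₀.FG ∧ ∃ s ∈ S, ∀ m : M, s • m ∈ N₀

/-- A module `M` is `S`-finitely presented: there is an exact sequence
`0 → K → F → M → 0` with `F` finitely generated free and `K` `S`-finite. -/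
def SFinitePres (R : Type*) [CommRing R] (S : Submonoid R)
    (M : Type*) [AddCommGroup M] [Module R M] : Prop :=
  ∃ (n : ℕ) (f : (Fin n → R) →ₗ[R] M), Function.Surjective f ∧
    ∃ K₀ : Submodule R (Fin n → R), K₀.FG ∧ K₀ ≤ LinearMap.ker f ∧
      ∃ s ∈ S, ∀ x ∈ LinearMap.ker f, s • x ∈ K₀

/-- An ideal `I` is `S`-finite. -/
def SFiniteIdeal (R : Type*) [CommRing R] (S : Submonoid R) (I : Ideal R) : Prop :=
  ∃ J : Ideal R, J.FG ∧ J ≤ I ∧ ∃ s ∈ S, ∀ x ∈ I, s * x ∈ J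

/-- `R` is an `S`-coherent ring: every finitely generated ideal is `S`-finitely presented. -/
def SCoherentRing (R : Type*) [CommRing R] (S : Submonoid R) : Prop :=
  ∀ I : Ideal R, I.FG → SFinitePres R S ↥I

/-- `M` is an `S`-coherent module: finitely generated and every finitely generated
submodule is `S`-finitely presented. -/
def SCoherentMod (R : Type*) [CommRing R] (S : Submonoid R)
    (M : Type*) [AddCommGroup M] [Module R M] : Prop :=
  Module.Finite R M ∧ ∀ N : Submodule R M, N.FG → SFinitePres R S ↥N

namespace Submodule

variable {R M N : Type*} [CommSemiring R] [AddCommMonoid M] [Module R M]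
  [AddCommMonoid N] [Module R N] (S : Submonoid R)

/-- `SFiniteMod R S P`, stated inside the ambient module; `SFinitePres` asks exactly this of a
kernel. -/
def IsSFinite (P : Submodule R M) : Prop :=
  ∃ C : Submodule R M, C.FG ∧ C ≤ P ∧ ∃ s ∈ S, ∀ x ∈ P, s • x ∈ C

variable {S}

theorem FG.isSFinite {P : Submodule R M} (hP : P.FG) : P.IsSFinite S :=
  ⟨P, hP, le_rfl, 1, S.one_mem, fun x hx => by rwa [one_smul]⟩

theorem IsSFinite.map {P : Submodule R M} (hP : P.IsSFinite S) (f : M →ₗ[R] N) :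
    (P.map f).IsSFinite S := by
  obtain ⟨C, hC, hCP, s, hs, hsP⟩ := hP
  refine ⟨C.map f, hC.map f, map_mono hCP, s, hs, ?_⟩
  rintro _ ⟨x, hx, rfl⟩
  rw [← map_smul]
  exact mem_map_of_mem (hsP x hx)

theorem IsSFinite.sup {P Q : Submodule R M} (hP : P.IsSFinite S) (hQ : Q.IsSFinite S) :
    (P ⊔ Q).IsSFinite S := by
  obtain ⟨C, hC, hCP, s, hs, hsP⟩ := hP
  obtain ⟨D, hD, hDQ, t, ht, htQ⟩ := hQ
  refine ⟨C ⊔ D, hC.sup hD, sup_le_sup hCP hDQ, s * t, S.mul_mem hs ht, ?_⟩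
  intro x hx
  obtain ⟨y, hy, z, hz, rfl⟩ := mem_sup.mp hx
  rw [smul_add, mul_smul, mul_comm, mul_smul]
  exact add_mem (mem_sup_left (hsP _ (P.smul_mem t hy))) (mem_sup_right (htQ _ (Q.smul_mem s hz)))

theorem IsSFinite.inf_of_forall_fg {P Q : Submodule R M} (hP : P.IsSFinite S)
    (hQ : ∀ C ≤ P, C.FG → (C ⊓ Q).IsSFinite S) : (P ⊓ Q).IsSFinite S := by
  obtain ⟨C, hC, hCP, s, hs, hsP⟩ := hP
  obtain ⟨D, hD, hDC, t, ht, htC⟩ := hQ C hCP hC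
  refine ⟨D, hD, hDC.trans (inf_le_inf_right Q hCP), t * s, S.mul_mem ht hs, ?_⟩
  rintro x ⟨hxP, hxQ⟩
  rw [mul_smul]
  exact htC _ ⟨hsP x hxP, Q.smul_mem s hxQ⟩

end Submodule

open Submodule

variable {R : Type*} [CommRing R] {S : Submonoid R}
  {M P : Type*} [AddCommGroup M] [Module R M] [AddCommGroup P] [Module R P]

theorem sFinitePres_iff : SFinitePres R S M ↔
    ∃ (n : ℕ) (f : (Fin n → R) →ₗ[R] M), Surjective f ∧ (ker f).IsSFinite S :=
  Iff.rfl

theorem SFinitePres.isSFinite_ker_of_projective [Module.Finite R P] [Module.Projective R P]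
    (hM : SFinitePres R S M) {g : P →ₗ[R] M} (hg : Surjective g) : (ker g).IsSFinite S := by
  obtain ⟨n, f, hf, hker⟩ := sFinitePres_iff.mp hM
  obtain ⟨h, hh⟩ := Module.projective_lifting_property f g hf
  obtain ⟨k, hk⟩ := Module.projective_lifting_property g f hg
  have hfh : ∀ x, f (h x) = g x := LinearMap.congr_fun hh
  have hgk : ∀ y, g (k y) = f y := LinearMap.congr_fun hk
  -- `x = (x - k (h x)) + k (h x)` splits `ker g` into an f.g. part and the image of `ker f`
  have hsplit : ker g = range (LinearMap.id - k ∘ₗ h) ⊔ (ker f).map k := by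
    refine le_antisymm (fun x hx => ?_) (sup_le ?_ ?_)
    · have hhx : h x ∈ ker f := by rw [mem_ker, hfh, mem_ker.mp hx]
      rw [← sub_add_cancel x (k (h x))]
      exact add_mem (mem_sup_left ⟨x, rfl⟩) (mem_sup_right (mem_map_of_mem hhx))
    · rintro _ ⟨y, rfl⟩
      simp [hgk, hfh]
    · rintro _ ⟨y, hy, rfl⟩
      rw [SetLike.mem_coe, mem_ker] at hy
      rw [mem_ker, hgk, hy]
  rw [hsplit, range_eq_map]
  exact (Module.Finite.fg_top.map _).isSFinite.sup (hker.map k)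

theorem SFinitePres.isSFinite_ker [Module.Finite R P] (hM : SFinitePres R S M)
    {g : P →ₗ[R] M} (hg : Surjective g) : (ker g).IsSFinite S := by
  obtain ⟨n, π, hπ⟩ := Module.Finite.exists_fin' R P
  have := (hM.isSFinite_ker_of_projective (g := g ∘ₗ π) (hg.comp hπ)).map π
  rwa [ker_comp, map_comap_eq_of_surjective hπ] at this

theorem SCoherentRing.isSFinite_ker [Module.Finite R P] (hR : SCoherentRing R S)
    (f : P →ₗ[R] R) : (ker f).IsSFinite S := by
  have hfg : (range f).FG := by rw [range_eq_map]; exact Module.Finite.fg_top.map f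
  have := (hR _ hfg).isSFinite_ker f.surjective_rangeRestrict
  rwa [ker_rangeRestrict] at this

theorem SCoherentRing.isSFinite_ker_pi (hR : SCoherentRing R S) {n : ℕ} :
    ∀ {P : Type*} [AddCommGroup P] [Module R P] [Module.Finite R P]
      (f : P →ₗ[R] Fin n → R), (ker f).IsSFinite S := by
  induction n with
  | zero =>
    intro P _ _ _ f
    rw [ker_eq_top.mpr (Subsingleton.elim _ _)]
    exact Module.Finite.fg_top.isSFinite
  | succ n ih =>
    intro P _ _ _ f
    have hker : ker f = ker (proj 0 ∘ₗ f) ⊓ ker (funLeft R R Fin.succ ∘ₗ f) := by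
      ext x
      simp [funext_iff, Fin.forall_fin_succ]
    rw [hker]
    refine (hR.isSFinite_ker _).inf_of_forall_fg fun C _ hC => ?_
    have : Module.Finite R C := Module.Finite.iff_fg.mpr hC
    have := (ih ((funLeft R R Fin.succ ∘ₗ f) ∘ₗ C.subtype)).map C.subtype
    rwa [ker_comp C.subtype, map_comap_subtype] at this

theorem SCoherentRing.isSFinite_comap [Module.Finite R P] (hR : SCoherentRing R S) {n : ℕ}
    (f : P →ₗ[R] Fin n → R) {K : Submodule R (Fin n → R)} (hK : K.FG) :
    (K.comap f).IsSFinite S := by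
  have : Module.Finite R K := Module.Finite.iff_fg.mpr hK
  have hcomap : K.comap f = (ker (f.coprod K.subtype)).map (fst R P K) := by
    ext x
    constructor
    · intro hx
      exact ⟨(x, -⟨f x, hx⟩), by simp, rfl⟩
    · rintro ⟨⟨y, z⟩, hyz, rfl⟩
      rw [SetLike.mem_coe, mem_ker, coprod_apply, add_eq_zero_iff_eq_neg] at hyz
      simp [hyz]
  rw [hcomap]
  exact (hR.isSFinite_ker_pi _).map _

theorem SCoherentRing.sCoherentMod_of_finitePresentation [Module.FinitePresentation R M]
    (hR : SCoherentRing R S) : SCoherentMod R S M := by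
  refine ⟨inferInstance, fun N hN => ?_⟩
  have : Module.Finite R N := Module.Finite.iff_fg.mpr hN
  obtain ⟨k, g, hg⟩ := Module.Finite.exists_fin' R N
  obtain ⟨n, π, hπ⟩ := Module.Finite.exists_fin' R M
  obtain ⟨h, hh⟩ := Module.projective_lifting_property π (N.subtype ∘ₗ g) hπ
  have hker : ker g = (ker π).comap h := by
    rw [← ker_comp, hh, ker_comp, N.ker_subtype, comap_bot]
  exact sFinitePres_iff.mpr
    ⟨k, g, hg, hker ▸ hR.isSFinite_comap h (Module.FinitePresentation.fg_ker π hπ)⟩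

/-- A ring `R` is S-coherent iff every finitely presented `R`-module is an
S-coherent module. -/
theorem stmt9 {R : Type u} [CommRing R] (S : Submonoid R) :
    SCoherentRing R S ↔
      ∀ (M : Type u) (_ : AddCommGroup M) (_ : Module R M),
        Module.FinitePresentation R M → SCoherentMod R S M :=
  ⟨fun hR _ _ _ _ => hR.sCoherentMod_of_finitePresentation,
    fun H I hI => (H R _ _ (Module.finitePresentation_of_projective R R)).2 I hI⟩
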